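/- In an m × m lattice graph with m ≥ 4, the WZPZ-neighborhood N^W_ℓ(x₀) of any vertex x₀ equals the entire lattice for all ℓ ≥ 4. In particular, once two vertices joined by an edge e are in the neighborhood, both endpoints of each edge parallel and adjacent to e (at distance 1) are also added at level s = 4, and iterating covers the whole lattice. -/
import Mathlib


/-- The KCN `ℓ`-neighborhood of a vertex `i` (vertex part): `i`, its nearest neighbors,
and all vertices on paths of length `≤ ℓ − 2` connecting two nearest neighbors of `i`. -/
def kcnVerts {V : Type} (G : SimpleGraph V) (ℓ : ℕ) (i : V) : Set V :=
  {i} ∪ G.neighborSet i ∪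
    {v | ∃ a b, G.Adj i a ∧ G.Adj i b ∧ a ≠ b ∧
      ∃ p : G.Walk a b, p.IsPath ∧ p.length ≤ ℓ - 2 ∧ v ∈ p.support}

/-- The KCN `ℓ`-neighborhood of a vertex `i` (edge part): the edges incident to `i`,
and all edges on paths of length `≤ ℓ − 2` connecting two nearest neighbors of `i`. -/
def kcnEdges {V : Type} (G : SimpleGraph V) (ℓ : ℕ) (i : V) : Set (Sym2 V) :=
  {e | ∃ a, G.Adj i a ∧ e = s(i, a)} ∪
    {e | ∃ a b, G.Adj i a ∧ G.Adj i b ∧ a ≠ b ∧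
      ∃ p : G.Walk a b, p.IsPath ∧ p.length ≤ ℓ - 2 ∧ e ∈ p.edges}

/-- The boundary of a subgraph, given as a pair (vertex set, edge set): vertices of the
subgraph incident to an edge of `G` not in the subgraph. -/
def wBdry {V : Type} (G : SimpleGraph V) (P : Set V × Set (Sym2 V)) : Set V :=
  {v | v ∈ P.1 ∧ ∃ w, G.Adj v w ∧ s(v, w) ∉ P.2}

/-- One step of the WZPZ construction at level `s`: add all vertices and edges lying on
paths of length `≤ s`, with all edges outside the current subgraph, connecting two
boundary vertices of the current subgraph. -/
def wAdd {V : Type} (G : SimpleGraph V) (s : ℕ) (P : Set V × Set (Sym2 V)) :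
    Set V × Set (Sym2 V) :=
  (P.1 ∪ {v | ∃ a ∈ wBdry G P, ∃ b ∈ wBdry G P, ∃ p : G.Walk a b,
      p.IsPath ∧ p.length ≤ s ∧ (∀ e ∈ p.edges, e ∉ P.2) ∧ v ∈ p.support},
   P.2 ∪ {e | ∃ a ∈ wBdry G P, ∃ b ∈ wBdry G P, ∃ p : G.Walk a b,
      p.IsPath ∧ p.length ≤ s ∧ (∀ e' ∈ p.edges, e' ∉ P.2) ∧ e ∈ p.edges})

/-- Saturation at level `s`: iterate `wAdd` until nothing more can be added (on a finite
graph, iterating more times than there are vertices plus possible edges suffices). -/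
def wSat {V : Type} [Fintype V] (G : SimpleGraph V) (s : ℕ)
    (P : Set V × Set (Sym2 V)) : Set V × Set (Sym2 V) :=
  (wAdd G s)^[Fintype.card V * Fintype.card V + Fintype.card V + 1] P

/-- The number of saturation iterations actually needed at level `s` starting from `P`
(the least `k` after which `wAdd` is stationary). -/
noncomputable def wSatCount {V : Type} (G : SimpleGraph V) (s : ℕ)
    (P : Set V × Set (Sym2 V)) : ℕ :=
  sInf {k | (wAdd G s)^[k + 1] P = (wAdd G s)^[k] P}

/-- The starting subgraph of the WZPZ construction: `x₀`, its neighbors and the edges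
joining `x₀` to them. -/
def wzpzBase {V : Type} (G : SimpleGraph V) (x₀ : V) : Set V × Set (Sym2 V) :=
  ({x₀} ∪ G.neighborSet x₀, {e | ∃ a, G.Adj x₀ a ∧ e = s(x₀, a)})

/-- The WZPZ `ℓ`-neighborhood of `x₀`: starting from `x₀` with its incident edges and
neighbors, for each `s = 1, …, ℓ` in increasing order repeatedly add all vertices and
edges on outside paths of length `≤ s` between boundary vertices, until saturation. -/
def wzpz {V : Type} [Fintype V] (G : SimpleGraph V) (x₀ : V) : ℕ → Set V × Set (Sym2 V)
  | 0 => wzpzBase G x₀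
  | (s + 1) => wSat G (s + 1) (wzpz G x₀ s)

/-- Every cycle of `G` has length at most `ℓ₀`. -/
def cyclesBounded {V : Type} (G : SimpleGraph V) (ℓ₀ : ℕ) : Prop :=
  ∀ (v : V) (c : G.Walk v v), c.IsCycle → c.length ≤ ℓ₀

/-- The `m × m` lattice graph: vertices `Fin m × Fin m`, with edges between vertices at
Manhattan distance 1. -/
def latticeGraph (m : ℕ) : SimpleGraph (Fin m × Fin m) :=
  SimpleGraph.fromRel (fun a b =>
    (a.1 = b.1 ∧ a.2.val + 1 = b.2.val) ∨ (a.2 = b.2 ∧ a.1.val + 1 = b.1.val))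

open SimpleGraph

-- generic walk/graph lemmas
lemma cross_edge {V : Type} {G : SimpleGraph V} (S : Set V) :
    ∀ {u z : V}, G.Walk u z → u ∈ S → z ∉ S → ∃ a b, G.Adj a b ∧ a ∈ S ∧ b ∉ S := by
  intro u z w
  induction w with
  | nil => intro h h'; exact absurd h h'
  | @cons u x z h p ih =>
    intro hu hz
    by_cases hx : x ∈ S
    · exact ih hx hz
    · exact ⟨u, x, h, hu, hx⟩

lemma mem_edge_of_mem_support {V : Type} {G : SimpleGraph V} :
    ∀ {a b : V} (p : G.Walk a b), 0 < p.length → ∀ v ∈ p.support, ∃ e ∈ p.edges, v ∈ e := by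
  intro a b p
  induction p with
  | nil => simp
  | @cons u x z h q ih =>
    intro _ v hv
    rw [SimpleGraph.Walk.support_cons, List.mem_cons] at hv
    rcases hv with rfl | hv
    · exact ⟨s(v, x), by simp, Sym2.mem_mk_left _ _⟩
    · cases q with
      | nil =>
        simp only [SimpleGraph.Walk.support_nil, List.mem_singleton] at hv
        subst hv
        exact ⟨s(u, v), by simp, Sym2.mem_mk_right _ _⟩
      | @cons x' y' z' h' q' =>
        obtain ⟨e, he, hve⟩ := ih (by simp) v hv
        exact ⟨e, by simp at he ⊢; tauto, hve⟩

lemma mem_support_of_mem_edge {V : Type} {G : SimpleGraph V} {a b v : V} {e : Sym2 V}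
    (p : G.Walk a b) (he : e ∈ p.edges) (hv : v ∈ e) : v ∈ p.support := by
  obtain ⟨y, rfl⟩ := Sym2.mem_iff_exists.1 hv
  exact p.fst_mem_support_of_mem_edges he

def WInv {V : Type} (G : SimpleGraph V) (P : Set V × Set (Sym2 V)) : Prop :=
  P.1.Nonempty ∧
  (∀ v ∈ P.1, ∃ e ∈ P.2, v ∈ e) ∧
  (∀ e ∈ P.2, e ∈ G.edgeSet ∧ ∀ v ∈ e, v ∈ P.1)

lemma Inv_wAdd {V : Type} {G : SimpleGraph V} {P} (h : WInv G P) (s : ℕ) :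
    WInv G (wAdd G s P) := by
  obtain ⟨hne, hI1, hI2⟩ := h
  refine ⟨hne.mono Set.subset_union_left, ?_, ?_⟩
  · rintro v (hv | ⟨a, ha, b, hb, p, hp, hlen, hout, hsup⟩)
    · obtain ⟨e, he, hve⟩ := hI1 v hv
      exact ⟨e, Or.inl he, hve⟩
    · cases p with
      | nil =>
        simp only [SimpleGraph.Walk.support_nil, List.mem_singleton] at hsup
        subst hsup
        obtain ⟨e, he, hve⟩ := hI1 v ha.1
        exact ⟨e, Or.inl he, hve⟩
      | @cons u x z hadj q =>
        obtain ⟨e, he, hve⟩ := mem_edge_of_mem_support _ (by simp) v hsup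
        exact ⟨e, Or.inr ⟨a, ha, b, hb, SimpleGraph.Walk.cons hadj q, hp, hlen, hout, he⟩, hve⟩
  · rintro e (he | ⟨a, ha, b, hb, p, hp, hlen, hout, hpe⟩)
    · obtain ⟨h1, h2⟩ := hI2 e he
      exact ⟨h1, fun v hv => Or.inl (h2 v hv)⟩
    · exact ⟨p.edges_subset_edgeSet hpe,
        fun v hv => Or.inr ⟨a, ha, b, hb, p, hp, hlen, hout,
          mem_support_of_mem_edge p hpe hv⟩⟩

lemma subset_wAdd1 {V : Type} (G : SimpleGraph V) (s : ℕ) (P) : P.1 ⊆ (wAdd G s P).1 :=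
  Set.subset_union_left

lemma subset_wAdd2 {V : Type} (G : SimpleGraph V) (s : ℕ) (P) : P.2 ⊆ (wAdd G s P).2 :=
  Set.subset_union_left

lemma wBdry_full {V : Type} (G : SimpleGraph V) :
    wBdry G (Set.univ, G.edgeSet) = ∅ := by
  ext v
  simp only [wBdry, Set.mem_setOf_eq, Set.mem_empty_iff_false, iff_false, not_and]
  rintro - ⟨w, hadj, hne⟩
  exact hne hadj

lemma wAdd_full {V : Type} (G : SimpleGraph V) (s : ℕ) :
    wAdd G s (Set.univ, G.edgeSet) = (Set.univ, G.edgeSet) := by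
  have hb := wBdry_full G
  unfold wAdd
  rw [hb]
  simp

lemma Inv_iter {V : Type} {G : SimpleGraph V} {P} (h : WInv G P) (s k : ℕ) :
    WInv G ((wAdd G s)^[k] P) := by
  induction k with
  | zero => exact h
  | succ k ih => rw [Function.iterate_succ_apply']; exact Inv_wAdd ih s


lemma lattice_adj' {m : ℕ} (a b : Fin m × Fin m) :
    (latticeGraph m).Adj a b ↔
      (a.1.val = b.1.val ∧ (a.2.val + 1 = b.2.val ∨ b.2.val + 1 = a.2.val)) ∨
      (a.2.val = b.2.val ∧ (a.1.val + 1 = b.1.val ∨ b.1.val + 1 = a.1.val)) := by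
  simp only [latticeGraph, SimpleGraph.fromRel_adj, ne_eq, Prod.ext_iff, Fin.ext_iff]
  omega

lemma exists_nb {m : ℕ} (hm : 2 ≤ m) (a : Fin m × Fin m) : ∃ b, (latticeGraph m).Adj a b := by
  have h1 : a.1.val < m := a.1.isLt
  by_cases h : a.1.val + 1 < m
  · exact ⟨(⟨a.1.val + 1, h⟩, a.2), by simp [lattice_adj'] <;> omega⟩
  · exact ⟨(⟨a.1.val - 1, by omega⟩, a.2), by simp [lattice_adj'] <;> omega⟩

lemma square_of_perp {m : ℕ} {a b c : Fin m × Fin m}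
    (hab : (latticeGraph m).Adj a b) (hac : (latticeGraph m).Adj a c)
    (hperp : (a.1 = b.1 ∧ a.2 = c.2) ∨ (a.2 = b.2 ∧ a.1 = c.1)) :
    ∃ d, (latticeGraph m).Adj b d ∧ (latticeGraph m).Adj d c ∧ d ≠ a := by
  rw [lattice_adj'] at hab hac
  simp only [Fin.ext_iff] at hperp
  rcases hperp with ⟨h1, h2⟩ | ⟨h1, h2⟩
  · refine ⟨(c.1, b.2), ?_, ?_, ?_⟩ <;>
      simp [lattice_adj', ne_eq, Prod.ext_iff, Fin.ext_iff] <;> omega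
  · refine ⟨(b.1, c.2), ?_, ?_, ?_⟩ <;>
      simp [lattice_adj', ne_eq, Prod.ext_iff, Fin.ext_iff] <;> omega

lemma perp_nb {m : ℕ} (hm : 2 ≤ m) {a b : Fin m × Fin m}
    (hab : (latticeGraph m).Adj a b) :
    ∃ w, (latticeGraph m).Adj a w ∧ ((a.1 = b.1 ∧ a.2 = w.2) ∨ (a.2 = b.2 ∧ a.1 = w.1)) := by
  rw [lattice_adj'] at hab
  rcases hab with ⟨h1, h2⟩ | ⟨h1, h2⟩
  · by_cases h : a.1.val + 1 < m
    · exact ⟨(⟨a.1.val + 1, h⟩, a.2), by simp [lattice_adj'] <;> omega,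
        Or.inl ⟨Fin.ext h1, rfl⟩⟩
    · have h1' : a.1.val < m := a.1.isLt
      exact ⟨(⟨a.1.val - 1, by omega⟩, a.2), by simp [lattice_adj'] <;> omega,
        Or.inl ⟨Fin.ext h1, rfl⟩⟩
  · by_cases h : a.2.val + 1 < m
    · exact ⟨(a.1, ⟨a.2.val + 1, h⟩), by simp [lattice_adj'] <;> omega,
        Or.inr ⟨Fin.ext h1, rfl⟩⟩
    · have h1' : a.2.val < m := a.2.isLt
      exact ⟨(a.1, ⟨a.2.val - 1, by omega⟩), by simp [lattice_adj'] <;> omega,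
        Or.inr ⟨Fin.ext h1, rfl⟩⟩

lemma perp_trans {m : ℕ} {a b c w : Fin m × Fin m}
    (hac : (latticeGraph m).Adj a c) (haw : (latticeGraph m).Adj a w)
    (h1 : ¬ ((a.1 = b.1 ∧ a.2 = c.2) ∨ (a.2 = b.2 ∧ a.1 = c.1)))
    (h2 : (a.1 = b.1 ∧ a.2 = w.2) ∨ (a.2 = b.2 ∧ a.1 = w.1)) :
    (a.1 = w.1 ∧ a.2 = c.2) ∨ (a.2 = w.2 ∧ a.1 = c.1) := by
  rw [lattice_adj'] at hac haw
  simp only [Fin.ext_iff, not_or, not_and] at h1 h2 ⊢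
  rcases hac with ⟨e1,e2⟩|⟨e1,e2⟩ <;> rcases haw with ⟨f1,f2⟩|⟨f1,f2⟩ <;> omega

-- reachability of the lattice
lemma reach_row {m : ℕ} (hm : 0 < m) : ∀ (i : ℕ) (hi : i < m) (j : Fin m),
    (latticeGraph m).Reachable (⟨i, hi⟩, j) (⟨0, hm⟩, j) := by
  intro i
  induction i with
  | zero => intro hi j; exact SimpleGraph.Reachable.refl _
  | succ i ih =>
    intro hi j
    have hadj : (latticeGraph m).Adj (⟨i + 1, hi⟩, j) (⟨i, by omega⟩, j) :=
      (lattice_adj' _ _).2 (Or.inr ⟨rfl, Or.inr rfl⟩)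
    exact hadj.reachable.trans (ih _ j)

lemma reach_col {m : ℕ} (hm : 0 < m) : ∀ (j : ℕ) (hj : j < m) (i : Fin m),
    (latticeGraph m).Reachable (i, ⟨j, hj⟩) (i, ⟨0, hm⟩) := by
  intro j
  induction j with
  | zero => intro hj i; exact SimpleGraph.Reachable.refl _
  | succ j ih =>
    intro hj i
    have hadj : (latticeGraph m).Adj (i, ⟨j + 1, hj⟩) (i, ⟨j, by omega⟩) :=
      (lattice_adj' _ _).2 (Or.inl ⟨rfl, Or.inr rfl⟩)
    exact hadj.reachable.trans (ih _ i)

lemma lattice_reach {m : ℕ} (hm : 0 < m) (a b : Fin m × Fin m) :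
    (latticeGraph m).Reachable a b := by
  have key : ∀ p : Fin m × Fin m, (latticeGraph m).Reachable p (⟨0, hm⟩, ⟨0, hm⟩) := by
    intro p
    obtain ⟨⟨i, hi⟩, j⟩ := p
    exact (reach_row hm i hi j).trans (reach_col hm j.val j.isLt _)
  exact (key a).trans (key b).symm

-- growth helpers
lemma edge_grow {V : Type} {G : SimpleGraph V} {P : Set V × Set (Sym2 V)}
    {a b : V} (ha : a ∈ P.1) (hb : b ∈ P.1) (hab : G.Adj a b) (hnP : s(a, b) ∉ P.2) :
    s(a, b) ∈ (wAdd G 4 P).2 := by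
  have hba : s(b, a) ∉ P.2 := by rwa [Sym2.eq_swap]
  refine Set.mem_union_right _
    ⟨a, ⟨ha, b, hab, hnP⟩, b, ⟨hb, a, hab.symm, hba⟩,
      SimpleGraph.Walk.cons hab SimpleGraph.Walk.nil, ?_, by simp, ?_, by simp⟩
  · have h1 : a ≠ b := hab.ne
    simp [SimpleGraph.Walk.isPath_def]
    tauto
  · intro e he
    simp at he
    subst he
    exact hnP

lemma sq_grow {V : Type} {G : SimpleGraph V} {P : Set V × Set (Sym2 V)}
    (hI2 : ∀ e ∈ P.2, e ∈ G.edgeSet ∧ ∀ v ∈ e, v ∈ P.1)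
    {a b c d : V} (ha : a ∈ P.1) (hb : b ∉ P.1) (hc : c ∈ P.1)
    (hab : G.Adj a b) (hbd : G.Adj b d) (hdc : G.Adj d c)
    (hda : d ≠ a) (hac : a ≠ c) :
    b ∈ (wAdd G 4 P).1 := by
  have hnb : ∀ x : V, s(x, b) ∉ P.2 := fun x hx => hb ((hI2 _ hx).2 b (Sym2.mem_mk_right x b))
  have hnb' : ∀ x : V, s(b, x) ∉ P.2 := fun x hx => hb ((hI2 _ hx).2 b (Sym2.mem_mk_left b x))
  have hbdra : a ∈ wBdry G P := ⟨ha, b, hab, hnb a⟩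
  have h1 : a ≠ b := hab.ne
  have h2 : b ≠ d := hbd.ne
  have h3 : d ≠ c := hdc.ne
  have h4 : b ≠ c := fun h => hb (h ▸ hc)
  by_cases hcd : s(c, d) ∈ P.2
  · have hd : d ∈ P.1 := (hI2 _ hcd).2 d (Sym2.mem_mk_right c d)
    refine Set.mem_union_right _
      ⟨a, hbdra, d, ⟨hd, b, hbd.symm, hnb d⟩,
        SimpleGraph.Walk.cons hab (SimpleGraph.Walk.cons hbd SimpleGraph.Walk.nil),
        ?_, by simp, ?_, by simp⟩
    · have h5 : a ≠ d := fun h => hda h.symm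
      simp [SimpleGraph.Walk.isPath_def]
      tauto
    · intro e he
      simp at he
      rcases he with rfl | rfl
      exacts [hnb a, hnb' d]
  · refine Set.mem_union_right _
      ⟨a, hbdra, c, ⟨hc, d, hdc.symm, hcd⟩,
        SimpleGraph.Walk.cons hab (SimpleGraph.Walk.cons hbd
          (SimpleGraph.Walk.cons hdc SimpleGraph.Walk.nil)),
        ?_, by simp, ?_, by simp⟩
    · have h5 : a ≠ d := fun h => hda h.symm
      simp [SimpleGraph.Walk.isPath_def]
      tauto
    · intro e he
      simp at he
      rcases he with rfl | rfl | rfl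
      exacts [hnb a, hnb' d, by rwa [Sym2.eq_swap]]

lemma inv_nb {V : Type} {G : SimpleGraph V} {P : Set V × Set (Sym2 V)}
    (hI1 : ∀ v ∈ P.1, ∃ e ∈ P.2, v ∈ e)
    (hI2 : ∀ e ∈ P.2, e ∈ G.edgeSet ∧ ∀ v ∈ e, v ∈ P.1)
    {a : V} (ha : a ∈ P.1) : ∃ c, G.Adj a c ∧ c ∈ P.1 ∧ s(a, c) ∈ P.2 := by
  obtain ⟨e, heP, haE⟩ := hI1 a ha
  obtain ⟨c, rfl⟩ := Sym2.mem_iff_exists.1 haE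
  obtain ⟨hedge, hend⟩ := hI2 _ heP
  exact ⟨c, hedge, hend c (Sym2.mem_mk_right a c), heP⟩

lemma grow {m : ℕ} (hm : 4 ≤ m) {P : Set (Fin m × Fin m) × Set (Sym2 (Fin m × Fin m))}
    (hInv : WInv (latticeGraph m) P)
    (hne : P ≠ (Set.univ, (latticeGraph m).edgeSet)) :
    wAdd (latticeGraph m) 4 P ≠ P := by
  obtain ⟨hne1, hI1, hI2⟩ := hInv
  suffices h : (∃ v, v ∉ P.1 ∧ v ∈ (wAdd (latticeGraph m) 4 P).1) ∨
      (∃ e, e ∉ P.2 ∧ e ∈ (wAdd (latticeGraph m) 4 P).2) by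
    rcases h with ⟨v, hv, hv'⟩ | ⟨e, he, he'⟩
    · intro heq; rw [heq] at hv'; exact hv hv'
    · intro heq; rw [heq] at he'; exact he he'
  have main : ∀ a b : Fin m × Fin m, a ∈ P.1 → b ∉ P.1 → (latticeGraph m).Adj a b →
      (∃ v, v ∉ P.1 ∧ v ∈ (wAdd (latticeGraph m) 4 P).1) ∨
      (∃ e, e ∉ P.2 ∧ e ∈ (wAdd (latticeGraph m) 4 P).2) := by
    intro a b ha hb hab
    obtain ⟨c, hac, hc, hacP⟩ := inv_nb hI1 hI2 ha
    by_cases hperp : ((a.1 = b.1 ∧ a.2 = c.2) ∨ (a.2 = b.2 ∧ a.1 = c.1))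
    · obtain ⟨d, hbd, hdc, hda⟩ := square_of_perp hab hac hperp
      exact Or.inl ⟨b, hb, sq_grow hI2 ha hb hc hab hbd hdc hda hac.ne⟩
    · obtain ⟨w, haw, hpw⟩ := perp_nb (by omega) hab
      by_cases hw1 : w ∈ P.1
      · by_cases hw2 : s(a, w) ∈ P.2
        · obtain ⟨d, hbd, hdw, hda⟩ := square_of_perp hab haw hpw
          exact Or.inl ⟨b, hb, sq_grow hI2 ha hb hw1 hab hbd hdw hda haw.ne⟩
        · exact Or.inr ⟨s(a, w), hw2, edge_grow ha hw1 haw hw2⟩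
      · have hpwc := perp_trans hac haw hperp hpw
        obtain ⟨d, hwd, hdc, hda⟩ := square_of_perp haw hac hpwc
        exact Or.inl ⟨w, hw1, sq_grow hI2 ha hw1 hc haw hwd hdc hda hac.ne⟩
  by_cases h1 : P.1 = Set.univ
  · have h2 : P.2 ≠ (latticeGraph m).edgeSet := by
      intro h; exact hne (Prod.ext_iff.2 ⟨h1, h⟩)
    have hsub : P.2 ⊆ (latticeGraph m).edgeSet := fun e he => (hI2 e he).1
    obtain ⟨e, hee, heP⟩ : ∃ e, e ∈ (latticeGraph m).edgeSet ∧ e ∉ P.2 := by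
      by_contra hcc
      push_neg at hcc
      exact h2 (Set.Subset.antisymm hsub hcc)
    revert hee heP
    induction e using Sym2.ind with
    | _ x y =>
      intro hee heP
      have hxy : (latticeGraph m).Adj x y := hee
      exact Or.inr ⟨s(x, y), heP,
        edge_grow (h1 ▸ Set.mem_univ x) (h1 ▸ Set.mem_univ y) hxy heP⟩
  · obtain ⟨z, hz⟩ : ∃ z, z ∉ P.1 := by
      by_contra hcc
      push_neg at hcc
      exact h1 (Set.eq_univ_of_forall hcc)
    obtain ⟨a0, ha0⟩ := hne1
    obtain ⟨wk⟩ := lattice_reach (by omega) a0 z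
    obtain ⟨a, b, hab, ha, hb⟩ := cross_edge P.1 wk ha0 hz
    exact main a b ha hb hab

noncomputable def msr {V : Type} (P : Set V × Set (Sym2 V)) : ℕ := P.1.ncard + P.2.ncard

lemma msr_lt {V : Type} [Finite V] {P Q : Set V × Set (Sym2 V)}
    (h1 : P.1 ⊆ Q.1) (h2 : P.2 ⊆ Q.2) (hne : P ≠ Q) : msr P < msr Q := by
  have f1 : Q.1.Finite := Set.toFinite _
  have f2 : Q.2.Finite := Set.toFinite _
  have hl1 : P.1.ncard ≤ Q.1.ncard := Set.ncard_le_ncard h1 f1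
  have hl2 : P.2.ncard ≤ Q.2.ncard := Set.ncard_le_ncard h2 f2
  have hd : P.1 ≠ Q.1 ∨ P.2 ≠ Q.2 := by
    by_contra hcc
    push_neg at hcc
    exact hne (Prod.ext_iff.2 ⟨hcc.1, hcc.2⟩)
  rcases hd with h | h
  · have := Set.ncard_lt_ncard (h1.ssubset_of_ne h) f1
    unfold msr; omega
  · have := Set.ncard_lt_ncard (h2.ssubset_of_ne h) f2
    unfold msr; omega

lemma msr_le {V : Type} [Fintype V] [DecidableEq V] (P : Set V × Set (Sym2 V)) :
    msr P ≤ Fintype.card V + Fintype.card (Sym2 V) := by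
  have h1 : P.1.ncard ≤ Fintype.card V := by
    have := Set.ncard_le_ncard (Set.subset_univ P.1) Set.finite_univ
    simpa [Set.ncard_univ, Nat.card_eq_fintype_card] using this
  have h2 : P.2.ncard ≤ Fintype.card (Sym2 V) := by
    have := Set.ncard_le_ncard (Set.subset_univ P.2) Set.finite_univ
    simpa [Set.ncard_univ, Nat.card_eq_fintype_card] using this
  unfold msr; omega

lemma sat_full {m : ℕ} (hm : 4 ≤ m) {P : Set (Fin m × Fin m) × Set (Sym2 (Fin m × Fin m))}
    (hInv : WInv (latticeGraph m) P) :
    wSat (latticeGraph m) 4 P = (Set.univ, (latticeGraph m).edgeSet) := by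
  have key : ∀ k, WInv (latticeGraph m) ((wAdd (latticeGraph m) 4)^[k] P) ∧
      ((wAdd (latticeGraph m) 4)^[k] P = (Set.univ, (latticeGraph m).edgeSet) ∨
        msr P + k ≤ msr ((wAdd (latticeGraph m) 4)^[k] P)) := by
    intro k
    induction k with
    | zero =>
      rw [Function.iterate_zero_apply]
      exact ⟨hInv, Or.inr (by omega)⟩
    | succ k ih =>
      obtain ⟨ihI, ihm⟩ := ih
      refine ⟨by rw [Function.iterate_succ_apply']; exact Inv_wAdd ihI 4, ?_⟩
      by_cases hfull : (wAdd (latticeGraph m) 4)^[k] P = (Set.univ, (latticeGraph m).edgeSet)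
      · left
        rw [Function.iterate_succ_apply', hfull, wAdd_full]
      · right
        rcases ihm with h | h
        · exact absurd h hfull
        have hgrow := grow hm ihI hfull
        have hlt : msr ((wAdd (latticeGraph m) 4)^[k] P) <
            msr ((wAdd (latticeGraph m) 4)^[k + 1] P) := by
          rw [Function.iterate_succ_apply']
          exact msr_lt (subset_wAdd1 (latticeGraph m) 4 _) (subset_wAdd2 (latticeGraph m) 4 _)
            (Ne.symm hgrow)
        omega
  unfold wSat
  set n := Fintype.card (Fin m × Fin m) with hn
  rcases (key (n * n + n + 1)).2 with h | h
  · exact h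
  · exfalso
    have hb := msr_le ((wAdd (latticeGraph m) 4)^[n * n + n + 1] P)
    rw [← hn] at hb
    have hcard : Fintype.card (Sym2 (Fin m × Fin m)) = Nat.choose (n + 1) 2 := Sym2.card
    have hch : Nat.choose (n + 1) 2 = (n + 1) * n / 2 := by
      rw [Nat.choose_two_right]; simp
    have hdiv : ((n + 1) * n / 2) * 2 ≤ (n + 1) * n := Nat.div_mul_le_self _ _
    have hring : (n + 1) * n = n * n + n := by ring
    have hpos : 1 ≤ n := by
      rw [hn]
      exact Fintype.card_pos_iff.2 ⟨(⟨0, by omega⟩, ⟨0, by omega⟩)⟩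
    have hnn : n ≤ n * n := Nat.le_mul_of_pos_left _ hpos
    rw [hcard, hch] at hb
    omega

lemma WInv_base {m : ℕ} (hm : 4 ≤ m) (x₀ : Fin m × Fin m) :
    WInv (latticeGraph m) (wzpzBase (latticeGraph m) x₀) := by
  obtain ⟨b0, hb0⟩ := exists_nb (by omega) x₀
  refine ⟨⟨x₀, Or.inl rfl⟩, ?_, ?_⟩
  · rintro v (rfl | hv)
    · exact ⟨s(v, b0), ⟨b0, hb0, rfl⟩, Sym2.mem_mk_left _ _⟩
    · exact ⟨s(x₀, v), ⟨v, hv, rfl⟩, Sym2.mem_mk_right _ _⟩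
  · rintro e ⟨a, hadj, rfl⟩
    refine ⟨hadj, ?_⟩
    intro v hv
    rcases Sym2.mem_iff.1 hv with rfl | rfl
    exacts [Or.inl rfl, Or.inr hadj]

lemma WInv_wzpz {m : ℕ} (hm : 4 ≤ m) (x₀ : Fin m × Fin m) (k : ℕ) :
    WInv (latticeGraph m) (wzpz (latticeGraph m) x₀ k) := by
  induction k with
  | zero => exact WInv_base hm x₀
  | succ k ih => exact Inv_iter ih (k + 1) _

/-- In an `m × m` lattice with `m ≥ 4`, the WZPZ `ℓ`-neighborhood of any vertex equals
the entire lattice for all `ℓ ≥ 4`. -/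
theorem stmt_16 (m : ℕ) (hm : 4 ≤ m) (x₀ : Fin m × Fin m) (ℓ : ℕ) (hℓ : 4 ≤ ℓ) :
    wzpz (latticeGraph m) x₀ ℓ = (Set.univ, (latticeGraph m).edgeSet) := by
  induction ℓ, hℓ using Nat.le_induction with
  | base => exact sat_full hm (WInv_wzpz hm x₀ 3)
  | succ n hn ih =>
    show wSat (latticeGraph m) (n + 1) (wzpz (latticeGraph m) x₀ n) = _
    rw [ih]
    exact Function.iterate_fixed (wAdd_full _ _) _
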